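/- Let T be a spider with center v whose legs have orders n_1, ..., n_k. If exactly two legs have order ≡ 2 (mod 3) and all other legs have order ≡ 0 (mod 3), then v is in no maximum dissociation set of T, yet v is in some maximum dissociation set of the graph obtained by deleting either one of those two legs. -/

import Mathlib

open scoped Classical

/-- `F` is a dissociation set of `G`: the induced subgraph `G[F]` has maximum degree ≤ 1. -/
def IsDissocSet {V : Type*} (G : SimpleGraph V) (F : Set V) : Prop :=
  ∀ u ∈ F, ∀ w ∈ F, ∀ w' ∈ F, G.Adj u w → G.Adj u w' → w = w'

/-- `F` is a maximum dissociation set of `G`. -/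
def IsMaxDissocSet {V : Type*} (G : SimpleGraph V) (F : Set V) : Prop :=
  IsDissocSet G F ∧ ∀ F' : Set V, IsDissocSet G F' → F'.ncard ≤ F.ncard

/-- The dissociation number ψ(G). -/
noncomputable def dissNum {V : Type*} (G : SimpleGraph V) : ℕ :=
  sSup {n | ∃ F : Set V, IsDissocSet G F ∧ F.ncard = n}

/-- `F` is a maximum dissociation set of the induced subgraph `G[S]`. -/
def IsMaxDissocOn {V : Type*} (G : SimpleGraph V) (S F : Set V) : Prop :=
  F ⊆ S ∧ IsDissocSet G F ∧
    ∀ F' : Set V, F' ⊆ S → IsDissocSet G F' → F'.ncard ≤ F.ncard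

/-- The dissociation number of the induced subgraph `G[S]`. -/
noncomputable def dissNumOn {V : Type*} (G : SimpleGraph V) (S : Set V) : ℕ :=
  sSup {n | ∃ F : Set V, F ⊆ S ∧ IsDissocSet G F ∧ F.ncard = n}

/-- The spider with center `none` and `k` legs, leg `i` being a path on `n i` vertices
hanging from the center. -/
def spider (k : ℕ) (n : Fin k → ℕ) : SimpleGraph (Option (Σ i : Fin k, Fin (n i))) :=
  SimpleGraph.fromRel (fun a b =>
    (a = none ∧ ∃ (i : Fin k) (h : 0 < n i), b = some ⟨i, ⟨0, h⟩⟩) ∨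
    (∃ (i : Fin k) (j j' : Fin (n i)), a = some ⟨i, j⟩ ∧ b = some ⟨i, j'⟩ ∧ (j' : ℕ) = j + 1))

/-- The vertex set of the `i`-th leg of the spider (the subtree below the `i`-th child). -/
def legSet (k : ℕ) (n : Fin k → ℕ) (i : Fin k) : Set (Option (Σ i : Fin k, Fin (n i))) :=
  {x | ∃ j : Fin (n i), x = some ⟨i, j⟩}

/-!
A path on `m` vertices has dissociation number `m - ⌊m/3⌋`: every block of three consecutive
vertices misses the set, and dropping every third vertex attains the bound. If the set may not
contain both of the first two vertices, every block of the shifted partition `{0, 1}`,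
`{2, 3, 4}`, `{5, 6, 7}`, … misses it, and the bound becomes `m - ⌊(m+1)/3⌋`, one less exactly
when `m ≡ 2 (mod 3)`. A dissociation set containing the center of the spider meets every leg in
such a set, so with two legs of order `≡ 2` it loses two vertices against the set dropping every
third vertex of each leg and gains only the center. Once one of these legs is deleted the loss is
one, and it is recovered by the center: take the center, the positions `j ≢ 1 (mod 3)` on the
remaining leg of order `≡ 2`, and the positions `j ≢ 0 (mod 3)` on the other legs.
-/

open Finset

def NoThreeConsecutive (T : Finset ℕ) : Prop := ∀ j, j ∈ T → j + 1 ∈ T → j + 2 ∉ T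

lemma card_le_sub_of_forall_exists_notMem {T : Finset ℕ} {m b : ℕ} (hT : T ⊆ range m)
    (f : ℕ → ℕ) (h : ∀ q < b, ∃ x < m, x ∉ T ∧ f x = q) : #T ≤ m - b := by
  have hb : range b ⊆ (range m \ T).image f := fun q hq => by
    obtain ⟨x, hxm, hxT, rfl⟩ := h q (mem_range.mp hq)
    exact mem_image_of_mem f (mem_sdiff.mpr ⟨mem_range.mpr hxm, hxT⟩)
  have hTm : #T ≤ m := by simpa using card_le_card hT
  have : b ≤ m - #T := calc
    b = #(range b) := (card_range b).symm
    _ ≤ #((range m \ T).image f) := card_le_card hb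
    _ ≤ #(range m \ T) := card_image_le
    _ = m - #T := by rw [card_sdiff_of_subset hT, card_range]
  omega

lemma NoThreeConsecutive.card_le {T : Finset ℕ} {m : ℕ} (hT : NoThreeConsecutive T)
    (hTm : T ⊆ range m) : #T ≤ m - m / 3 := by
  refine card_le_sub_of_forall_exists_notMem hTm (· / 3) fun q hq => ?_
  by_cases h0 : 3 * q ∈ T
  · by_cases h1 : 3 * q + 1 ∈ T
    · exact ⟨3 * q + 2, by omega, hT _ h0 h1, by omega⟩
    · exact ⟨3 * q + 1, by omega, h1, by omega⟩
  · exact ⟨3 * q, by omega, h0, by omega⟩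

lemma NoThreeConsecutive.card_le_of_not_zero_one {T : Finset ℕ} {m : ℕ}
    (hT : NoThreeConsecutive T) (hTm : T ⊆ range m) (h01 : ¬(0 ∈ T ∧ 1 ∈ T)) :
    #T ≤ m - (m + 1) / 3 := by
  refine card_le_sub_of_forall_exists_notMem hTm (fun x => (x + 1) / 3) fun q hq => ?_
  rcases q with _ | q
  · by_cases h0 : 0 ∈ T
    · exact ⟨1, by omega, fun h1 => h01 ⟨h0, h1⟩, rfl⟩
    · exact ⟨0, by omega, h0, rfl⟩
  · by_cases h0 : 3 * q + 2 ∈ T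
    · by_cases h1 : 3 * q + 3 ∈ T
      · exact ⟨3 * q + 4, by omega, hT _ h0 h1, by omega⟩
      · exact ⟨3 * q + 3, by omega, h1, by omega⟩
    · exact ⟨3 * q + 2, by omega, h0, by omega⟩

lemma card_filter_mod_three_ne (m : ℕ) {r : ℕ} (hr : r < 3) :
    #((range m).filter (· % 3 ≠ r)) = m - (m + 2 - r) / 3 := by
  induction m with
  | zero => simp
  | succ m ih =>
    rw [range_add_one, filter_insert]
    split_ifs with h
    · rw [card_insert_of_notMem (by simp), ih]
      omega
    · rw [ih]
      omega

lemma sum_sub_div_three {ι : Type*} (s : Finset ι) (f : ι → ℕ) :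
    ∑ l ∈ s, (f l - f l / 3) = ∑ l ∈ s, (f l - (f l + 1) / 3) + #(s.filter (f · % 3 = 2)) := by
  rw [card_filter, ← sum_add_distrib]
  refine sum_congr rfl fun l _ => ?_
  split_ifs <;> omega

section Spider

variable {k : ℕ} {n : Fin k → ℕ}

lemma spider_adj_some_some {i i' : Fin k} {j : Fin (n i)} {j' : Fin (n i')} :
    (spider k n).Adj (some ⟨i, j⟩) (some ⟨i', j'⟩) ↔
      i = i' ∧ ((j' : ℕ) = j + 1 ∨ (j : ℕ) = j' + 1) := by
  simp only [spider, SimpleGraph.fromRel_adj, ne_eq, Option.some.injEq, reduceCtorEq, false_and,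
    false_or, Sigma.mk.inj_iff]
  constructor
  · rintro ⟨-, ⟨l, a, b, ⟨rfl, ha⟩, ⟨rfl, hb⟩, h⟩ | ⟨l, a, b, ⟨rfl, ha⟩, ⟨rfl, hb⟩, h⟩⟩ <;>
      simp only [heq_eq_eq] at ha hb <;> subst ha hb <;> omega
  · rintro ⟨rfl, h⟩
    refine ⟨fun ⟨_, h'⟩ => by simp only [heq_eq_eq] at h'; subst h'; omega, ?_⟩
    rcases h with h | h
    · exact Or.inl ⟨i, j, j', ⟨rfl, HEq.rfl⟩, ⟨rfl, HEq.rfl⟩, h⟩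
    · exact Or.inr ⟨i, j', j, ⟨rfl, HEq.rfl⟩, ⟨rfl, HEq.rfl⟩, h⟩

lemma spider_adj_none_some {i : Fin k} {j : Fin (n i)} :
    (spider k n).Adj none (some ⟨i, j⟩) ↔ (j : ℕ) = 0 := by
  simp only [spider, SimpleGraph.fromRel_adj, ne_eq, reduceCtorEq, not_false_eq_true, true_and,
    Option.some.injEq, Sigma.mk.inj_iff, false_and, exists_false, or_false, and_false]
  constructor
  · rintro ⟨l, hl, rfl, h⟩
    simp only [heq_eq_eq] at h
    subst h
    rfl
  · intro h
    exact ⟨i, by omega, rfl, by rw [heq_eq_eq, Fin.ext_iff]; exact h⟩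

lemma spider_adj_some_none {i : Fin k} {j : Fin (n i)} :
    (spider k n).Adj (some ⟨i, j⟩) none ↔ (j : ℕ) = 0 := by
  rw [SimpleGraph.adj_comm, spider_adj_none_some]

/-- Position `j` of leg `i` is the vertex at distance `j + 1` from the center. -/
noncomputable def legTrace (F : Set (Option (Σ i : Fin k, Fin (n i)))) (i : Fin k) : Finset ℕ :=
  (univ.filter fun j : Fin (n i) => some ⟨i, j⟩ ∈ F).map Fin.valEmbedding

def spiderSet (n : Fin k → ℕ) (c : Prop) (P : Fin k → ℕ → Prop) :
    Set (Option (Σ i : Fin k, Fin (n i))) :=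
  {x | x.elim c fun p => P p.1 p.2}

@[simp]
lemma mem_spiderSet_none {c : Prop} {P : Fin k → ℕ → Prop} : none ∈ spiderSet n c P ↔ c :=
  Iff.rfl

@[simp]
lemma mem_spiderSet_some {c : Prop} {P : Fin k → ℕ → Prop} {x : Σ i : Fin k, Fin (n i)} :
    some x ∈ spiderSet n c P ↔ P x.1 x.2 :=
  Iff.rfl

variable {F : Set (Option (Σ i : Fin k, Fin (n i)))}

lemma mem_legTrace {i : Fin k} {j : ℕ} :
    j ∈ legTrace F i ↔ ∃ h : j < n i, some ⟨i, ⟨j, h⟩⟩ ∈ F := by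
  simp only [legTrace, mem_map, mem_filter_univ, Fin.valEmbedding_apply]
  exact ⟨fun ⟨a, ha, haj⟩ => haj ▸ ⟨a.isLt, ha⟩, fun ⟨h, hj⟩ => ⟨⟨j, h⟩, hj, rfl⟩⟩

lemma legTrace_subset_range (i : Fin k) : legTrace F i ⊆ range (n i) :=
  fun _ hj => mem_range.mpr (mem_legTrace.mp hj).1

lemma legTrace_eq_empty_of_subset_compl_legSet {i : Fin k} (hF : F ⊆ (legSet k n i)ᶜ)
    (l : Fin k) (hl : l ∉ univ.erase i) : legTrace F l = ∅ := by
  obtain rfl : l = i := by simpa using hl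
  exact eq_empty_of_forall_notMem fun j hj => by
    obtain ⟨h, hjF⟩ := mem_legTrace.mp hj
    exact hF hjF ⟨⟨j, h⟩, rfl⟩

lemma legTrace_spiderSet {c : Prop} {P : Fin k → ℕ → Prop} [∀ i, DecidablePred (P i)]
    (i : Fin k) :
    legTrace (spiderSet n c P) i = (range (n i)).filter (P i) := by
  ext j
  simp only [mem_legTrace, spiderSet, Set.mem_ofPred_eq, Option.elim_some, mem_filter, mem_range,
    exists_prop]

lemma ncard_eq_sum_card_legTrace :
    F.ncard = (if none ∈ F then 1 else 0) + ∑ i, #(legTrace F i) := by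
  rw [Set.ncard_eq_toFinset_card', ← Set.filter_mem_univ_eq_toFinset, card_filter,
    Fintype.sum_option, ← univ_sigma_univ, sum_sigma]
  congr 1
  refine sum_congr rfl fun i _ => ?_
  rw [legTrace, card_map, card_filter]

lemma ncard_eq_sum_card_legTrace_of_legTrace_eq_empty {s : Finset (Fin k)}
    (hs : ∀ i ∉ s, legTrace F i = ∅) :
    F.ncard = (if none ∈ F then 1 else 0) + ∑ i ∈ s, #(legTrace F i) := by
  rw [ncard_eq_sum_card_legTrace,
    sum_subset (subset_univ s) fun i _ hi => by rw [hs i hi, card_empty]]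

namespace IsDissocSet

lemma noThreeConsecutive_legTrace (hF : IsDissocSet (spider k n) F) (i : Fin k) :
    NoThreeConsecutive (legTrace F i) := by
  intro j hj hj₁ hj₂
  obtain ⟨h, hjF⟩ := mem_legTrace.mp hj
  obtain ⟨h₁, hj₁F⟩ := mem_legTrace.mp hj₁
  obtain ⟨h₂, hj₂F⟩ := mem_legTrace.mp hj₂
  have := hF _ hj₁F _ hjF _ hj₂F (spider_adj_some_some.mpr ⟨rfl, by simp⟩)
    (spider_adj_some_some.mpr ⟨rfl, by simp⟩)
  simp [Sigma.ext_iff] at this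

lemma not_zero_mem_and_one_mem_legTrace (hF : IsDissocSet (spider k n) F) (hc : none ∈ F)
    (i : Fin k) : ¬(0 ∈ legTrace F i ∧ 1 ∈ legTrace F i) := by
  rintro ⟨hj₀, hj₁⟩
  obtain ⟨h₀, hj₀F⟩ := mem_legTrace.mp hj₀
  obtain ⟨h₁, hj₁F⟩ := mem_legTrace.mp hj₁
  exact Option.some_ne_none _ (hF _ hj₀F _ hj₁F _ hc (spider_adj_some_some.mpr ⟨rfl, by simp⟩)
    (spider_adj_some_none.mpr rfl))

lemma ncard_le_of_center_notMem (hF : IsDissocSet (spider k n) F) (hc : none ∉ F)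
    {s : Finset (Fin k)} (hs : ∀ i ∉ s, legTrace F i = ∅) :
    F.ncard ≤ ∑ i ∈ s, (n i - n i / 3) := by
  rw [ncard_eq_sum_card_legTrace_of_legTrace_eq_empty hs, if_neg hc, zero_add]
  exact sum_le_sum fun i _ =>
    (hF.noThreeConsecutive_legTrace i).card_le (legTrace_subset_range i)

lemma ncard_le_of_center_mem (hF : IsDissocSet (spider k n) F) (hc : none ∈ F)
    {s : Finset (Fin k)} (hs : ∀ i ∉ s, legTrace F i = ∅) :
    F.ncard ≤ 1 + ∑ i ∈ s, (n i - (n i + 1) / 3) := by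
  rw [ncard_eq_sum_card_legTrace_of_legTrace_eq_empty hs, if_pos hc]
  exact Nat.add_le_add_left (sum_le_sum fun i _ =>
    (hF.noThreeConsecutive_legTrace i).card_le_of_not_zero_one (legTrace_subset_range i)
      (hF.not_zero_mem_and_one_mem_legTrace hc i)) 1

lemma ncard_le_of_subset_compl_legSet (hF : IsDissocSet (spider k n) F) {i i' : Fin k}
    (hFi : F ⊆ (legSet k n i)ᶜ) (h2 : ∀ l, l ≠ i → l ≠ i' → n l % 3 ≠ 2) :
    F.ncard ≤ 1 + ∑ l ∈ univ.erase i, (n l - (n l + 1) / 3) := by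
  have hs := legTrace_eq_empty_of_subset_compl_legSet hFi
  have hfilter : #((univ.erase i).filter fun l => n l % 3 = 2) ≤ 1 := by
    refine (card_le_card fun l hl => ?_).trans (card_singleton i').le
    simp only [mem_filter, mem_erase] at hl
    exact mem_singleton.mpr (by_contra fun hl' => h2 l hl.1.1 hl' hl.2)
  by_cases hc : none ∈ F
  · exact hF.ncard_le_of_center_mem hc hs
  · have := hF.ncard_le_of_center_notMem hc hs
    rw [sum_sub_div_three] at this
    omega

end IsDissocSet

lemma isDissocSet_spiderSet {c : Prop} {P : Fin k → ℕ → Prop}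
    (h3 : ∀ i j, P i j → P i (j + 1) → ¬P i (j + 2))
    (hc : c → ∀ i i', P i 0 → P i' 0 → i = i')
    (h01 : c → ∀ i, P i 0 → ¬P i 1) :
    IsDissocSet (spider k n) (spiderSet n c P) := by
  rintro (_ | ⟨i, j⟩) hu (_ | ⟨a, ja⟩) hw (_ | ⟨b, jb⟩) hw' huw huw'
  · rfl
  · exact absurd huw (SimpleGraph.irrefl _)
  · exact absurd huw' (SimpleGraph.irrefl _)
  · rw [spider_adj_none_some] at huw huw'
    simp only [mem_spiderSet_none, mem_spiderSet_some, huw, huw'] at hu hw hw'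
    obtain rfl := hc hu a b hw hw'
    simp [Fin.ext_iff, huw, huw']
  · rfl
  · rw [spider_adj_some_none] at huw
    obtain ⟨rfl, hb⟩ := spider_adj_some_some.mp huw'
    have hb1 : (jb : ℕ) = 1 := by omega
    simp only [mem_spiderSet_none, mem_spiderSet_some, huw, hb1] at hu hw hw'
    exact absurd hw' (h01 hw i hu)
  · rw [spider_adj_some_none] at huw'
    obtain ⟨rfl, ha⟩ := spider_adj_some_some.mp huw
    have ha1 : (ja : ℕ) = 1 := by omega
    simp only [mem_spiderSet_none, mem_spiderSet_some, huw', ha1] at hu hw hw'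
    exact absurd hw (h01 hw' i hu)
  · obtain ⟨rfl, ha⟩ := spider_adj_some_some.mp huw
    obtain ⟨rfl, hb⟩ := spider_adj_some_some.mp huw'
    simp only [mem_spiderSet_some] at hu hw hw'
    have hP : ∀ {x y z : ℕ}, P i x → P i y → P i z → y = x + 1 → z = y + 1 → False := by
      rintro x _ _ hx hy hz rfl rfl
      exact h3 i x hx hy hz
    by_cases hab : (ja : ℕ) = jb
    · simp [Fin.ext_iff, hab]
    · rcases ha with ha | ha <;> rcases hb with hb | hb
      · omega
      · exact (hP hw' hu hw (by omega) (by omega)).elim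
      · exact (hP hw hu hw' (by omega) (by omega)).elim
      · omega

theorem center_notMem_of_isMaxDissocSet (h2 : 2 ≤ #(univ.filter fun i => n i % 3 = 2))
    {F : Set (Option (Σ i : Fin k, Fin (n i)))} (hF : IsMaxDissocSet (spider k n) F) :
    none ∉ F := by
  intro hc
  let F₀ := spiderSet n False fun _ j => j % 3 ≠ 2
  have hF₀ : IsDissocSet (spider k n) F₀ :=
    isDissocSet_spiderSet (fun _ _ _ _ => by omega) False.elim False.elim
  have hcard₀ : F₀.ncard = ∑ i, (n i - n i / 3) := by
    rw [ncard_eq_sum_card_legTrace, if_neg (show none ∉ F₀ from id), zero_add]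
    exact sum_congr rfl fun i _ => by
      rw [legTrace_spiderSet, card_filter_mod_three_ne _ (by norm_num), Nat.add_sub_cancel]
  have hle := hF.2 F₀ hF₀
  have hge := hF.1.ncard_le_of_center_mem hc (s := univ) (by simp)
  rw [hcard₀, sum_sub_div_three] at hle
  omega

theorem exists_isMaxDissocOn_compl_legSet_center_mem {i i' : Fin k} (hi' : i' ≠ i)
    (h2 : n i' % 3 = 2) (h0 : ∀ l, l ≠ i → l ≠ i' → n l % 3 = 0) :
    ∃ F, IsMaxDissocOn (spider k n) (legSet k n i)ᶜ F ∧ none ∈ F := by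
  -- Only leg `i'` keeps its vertex next to the center.
  let r : Fin k → ℕ := fun l => if l = i' then 1 else 0
  have hr : ∀ l, r l < 3 := fun l => by simp only [r]; split_ifs <;> norm_num
  let F₁ := spiderSet n True fun l j => l ≠ i ∧ j % 3 ≠ r l
  have hF₁ : F₁ ⊆ (legSet k n i)ᶜ := by
    rintro (_ | ⟨l, j⟩) hx ⟨j', hj'⟩
    · simp at hj'
    · simp only [Option.some.injEq, Sigma.mk.inj_iff] at hj'
      exact hx.1 hj'.1
  have hcard₁ : F₁.ncard = 1 + ∑ l ∈ univ.erase i, (n l - (n l + 1) / 3) := by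
    rw [ncard_eq_sum_card_legTrace_of_legTrace_eq_empty
      (legTrace_eq_empty_of_subset_compl_legSet hF₁), if_pos (show none ∈ F₁ from trivial)]
    refine congrArg _ (sum_congr rfl fun l hl => ?_)
    have hli := ne_of_mem_erase hl
    rw [legTrace_spiderSet, filter_congr fun j _ => and_iff_right hli,
      card_filter_mod_three_ne _ (hr l)]
    simp only [r]
    split_ifs with hl'
    · omega
    · have := h0 l hli hl'
      omega
  refine ⟨F₁, ⟨hF₁, ?_, fun F hFi hF => ?_⟩, trivial⟩
  · have hr0 : ∀ l, 0 % 3 ≠ r l → l = i' := fun l h => by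
      by_contra hl
      simp [r, hl] at h
    refine isDissocSet_spiderSet (fun l j h h₁ h₂ => ?_) (fun _ l l' hl hl' => ?_)
      (fun _ l hl hl₁ => ?_)
    · have := hr l
      omega
    · exact (hr0 l hl.2).trans (hr0 l' hl'.2).symm
    · obtain rfl := hr0 l hl.2
      simp [r] at hl₁
  · rw [hcard₁]
    exact hF.ncard_le_of_subset_compl_legSet hFi fun l hli hli' => by
      have := h0 l hli hli'
      omega

end Spider

theorem stmt9_general (k : ℕ) (n : Fin k → ℕ)
    (h2 : (Finset.univ.filter fun i => n i % 3 = 2).card = 2)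
    (h0 : ∀ i, n i % 3 = 2 ∨ n i % 3 = 0) :
    (∀ F, IsMaxDissocSet (spider k n) F → none ∉ F) ∧
    ∀ i : Fin k, n i % 3 = 2 →
      ∃ F, IsMaxDissocOn (spider k n) (legSet k n i)ᶜ F ∧ none ∈ F := by
  refine ⟨fun F => center_notMem_of_isMaxDissocSet h2.ge, fun i hi => ?_⟩
  obtain ⟨i', hi'⟩ := card_eq_one.mp <| show #((univ.filter fun l => n l % 3 = 2).erase i) = 1 by
    rw [card_erase_of_mem (by simpa using hi), h2]
  have hmem (l : Fin k) : l ≠ i ∧ n l % 3 = 2 ↔ l = i' := by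
    simpa using Finset.ext_iff.mp hi' l
  obtain ⟨hi'i, h2'⟩ := (hmem i').mpr rfl
  exact exists_isMaxDissocOn_compl_legSet_center_mem hi'i h2' fun l hli hli' =>
    (h0 l).resolve_left fun hl => hli' ((hmem l).mp ⟨hli, hl⟩)

theorem stmt9 (k : ℕ) (n : Fin k → ℕ) (hn : ∀ i, 1 ≤ n i)
    (h2 : (Finset.univ.filter fun i => n i % 3 = 2).card = 2)
    (h0 : ∀ i, n i % 3 = 2 ∨ n i % 3 = 0) :
    (∀ F, IsMaxDissocSet (spider k n) F → none ∉ F) ∧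
    ∀ i : Fin k, n i % 3 = 2 →
      ∃ F, IsMaxDissocOn (spider k n) (legSet k n i)ᶜ F ∧ none ∈ F :=
  stmt9_general k n h2 h0
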